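/- Let w be a finite word whose longest proper palindromic suffix v satisfies w = zv with z nonempty, and suppose w is rich. Then the proper palindromic closure zv(reverse of z) is rich. -/

import Mathlib

open List

variable {A : Type*}

/-- All factors (contiguous subwords) of a word, as a list. -/
def Factors (w : List A) : List (List A) := w.tails.flatMap List.inits

/-- The set of distinct palindromic factors of `w` (including the empty word). -/
def palFactors [DecidableEq A] (w : List A) : Finset (List A) :=
  ((Factors w).filter (fun u => decide (u.reverse = u))).toFinset

/-- A word is rich if it has exactly `|w| + 1` distinct palindromic factors. -/
def IsRich [DecidableEq A] (w : List A) : Prop :=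
  (palFactors w).card = w.length + 1

/-- The defect of a finite word. -/
def defect [DecidableEq A] (w : List A) : ℕ :=
  w.length + 1 - (palFactors w).card

/-- `u` is a (finite) factor of the infinite word `z`. -/
def FactorOfInf (u : List A) (z : ℕ → A) : Prop :=
  ∃ i, u = (List.range u.length).map (fun k => z (i + k))

/-- An infinite word is rich if all of its finite factors are rich. -/
def InfRich [DecidableEq A] (z : ℕ → A) : Prop :=
  ∀ u : List A, FactorOfInf u z → IsRich u

/-- The longest palindromic suffix of `w`. -/
def lps [DecidableEq A] (w : List A) : List A :=
  (w.tails.find? (fun u => decide (u.reverse = u))).getD []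

/-- The number of occurrences of `u` as a factor of `w` (counted by position). -/
def occCount [DecidableEq A] (u w : List A) : ℕ :=
  w.tails.countP (fun t => decide (u <+: t))

/-- The periodic infinite word `u^∞`. -/
def periodicWord (u : List A) (hu : u ≠ []) : ℕ → A :=
  fun i => u.get ⟨i % u.length, Nat.mod_lt _ (List.length_pos_iff.mpr hu)⟩

/-!
Write `z = p ++ q` and `P_q = q ++ v ++ q.reverse`. By induction on `q`, the word
`p ++ P_q` stays rich and `P_q` occurs in it only as a prefix or a suffix: if `b` is the next
letter of `z` to the left, then `b :: P_q ++ [b]` cannot already occur in `p ++ P_q`, so closing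
it adds a new palindrome. The base case `q = []`, that `v` occurs in `w` only at its ends,
combines the maximality of `v` with the fact that in a rich word the longest palindromic suffix
occurs only once.
-/

lemma mem_Factors {u w : List A} : u ∈ Factors w ↔ u <:+: w := by
  simp only [Factors, mem_flatMap, mem_tails, mem_inits, infix_iff_prefix_suffix]
  tauto

lemma infix_of_concat_eq_append {u x s t : List A} {a : A} (h : u ++ [a] = s ++ x ++ t)
    (ht : t ≠ []) : x <:+: u := by
  obtain ⟨t', b, rfl⟩ := (eq_nil_or_concat t).resolve_left ht
  rw [concat_eq_append, ← append_assoc] at h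
  exact ⟨s, t', (append_inj' h rfl).1.symm⟩

def NoInteriorOccurrence (u w : List A) : Prop :=
  ∀ s t, w = s ++ u ++ t → s = [] ∨ t = []

def IsLongestPalSuffix (P w : List A) : Prop :=
  P <:+ w ∧ P.reverse = P ∧ ∀ q, q <:+ w → q.reverse = q → q.length ≤ P.length

section DecidableEq

variable [DecidableEq A]

lemma exists_isLongestPalSuffix (w : List A) : ∃ P, IsLongestPalSuffix P w := by
  let S : Finset (List A) := (w.tails.filter fun u => u.reverse = u).toFinset
  have hS : ∀ u, u ∈ S ↔ u <:+ w ∧ u.reverse = u := by simp [S]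
  obtain ⟨P, hP, hmax⟩ := S.exists_max_image length ⟨[], (hS []).2 ⟨nil_suffix, rfl⟩⟩
  exact ⟨P, (hS P).1 hP |>.1, (hS P).1 hP |>.2, fun q hq hqp => hmax q ((hS q).2 ⟨hq, hqp⟩)⟩

lemma mem_palFactors {u w : List A} : u ∈ palFactors w ↔ u <:+: w ∧ u.reverse = u := by
  simp [palFactors, mem_Factors]

lemma palFactors_mono {w w' : List A} (h : w <:+: w') : palFactors w ⊆ palFactors w' :=
  fun _ hu => mem_palFactors.2 ⟨(mem_palFactors.1 hu).1.trans h, (mem_palFactors.1 hu).2⟩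

lemma palFactors_reverse (w : List A) : palFactors w.reverse = palFactors w := by
  ext u
  simp only [mem_palFactors, and_congr_left_iff]
  intro hu
  rw [← reverse_infix, hu, reverse_reverse]

/-- A palindromic suffix of `u ++ [a]` shorter than the longest one `P` is a prefix of `P`
that stops before the last letter, hence a factor of `u`. -/
lemma palFactors_concat_subset {u P : List A} {a : A} (hP : IsLongestPalSuffix P (u ++ [a])) :
    palFactors (u ++ [a]) ⊆ insert P (palFactors u) := by
  obtain ⟨hPw, hPp, hmax⟩ := hP
  intro x hx
  obtain ⟨hxw, hxp⟩ := mem_palFactors.1 hx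
  rw [Finset.mem_insert, mem_palFactors]
  rcases infix_concat_iff.1 hxw with hsuf | hinf
  · rcases (hmax x hsuf hxp).lt_or_eq with hlt | heq
    · have hxP : x <+: P := by
        simpa [hxp, hPp] using reverse_prefix.2 (suffix_of_suffix_length_le hsuf hPw hlt.le)
      obtain ⟨d, rfl⟩ := hxP
      obtain ⟨s, hs⟩ := hPw
      have hd : d ≠ [] := by rintro rfl; simp at hlt
      exact Or.inr ⟨infix_of_concat_eq_append (s := s) (by rw [← hs, append_assoc]) hd, hxp⟩
    · exact Or.inl (suffix_of_suffix_length_le hsuf hPw heq.le |>.eq_of_length heq)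
  · exact Or.inr ⟨hinf, hxp⟩

lemma card_palFactors_concat_le (u : List A) (a : A) :
    (palFactors (u ++ [a])).card ≤ (palFactors u).card + 1 := by
  obtain ⟨P, hP⟩ := exists_isLongestPalSuffix (u ++ [a])
  exact (Finset.card_le_card (palFactors_concat_subset hP)).trans (Finset.card_insert_le _ _)

lemma card_palFactors_le (u : List A) : (palFactors u).card ≤ u.length + 1 := by
  induction u using reverseRecOn with
  | nil =>
    have : palFactors ([] : List A) ⊆ {[]} := fun x hx => by
      simpa using infix_nil.1 (mem_palFactors.1 hx).1
    simpa using Finset.card_le_card this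
  | append_singleton u a ih =>
    have := card_palFactors_concat_le u a
    simp only [length_append, length_singleton]
    omega

namespace IsRich

lemma of_concat {u : List A} {a : A} (h : IsRich (u ++ [a])) : IsRich u := by
  have := card_palFactors_concat_le u a
  have := card_palFactors_le u
  simp only [IsRich, length_append, length_singleton] at *
  omega

lemma of_prefix {p w : List A} (h : IsRich w) (hp : p <+: w) : IsRich p := by
  obtain ⟨t, rfl⟩ := hp
  induction t using reverseRecOn with
  | nil => simpa using h
  | append_singleton t a ih => exact ih (of_concat (by rwa [← append_assoc] at h))

lemma reverse {w : List A} (h : IsRich w) : IsRich w.reverse := by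
  rwa [IsRich, palFactors_reverse, length_reverse]

lemma concat {u P : List A} {a : A} (h : IsRich u) (hP : P ∈ palFactors (u ++ [a]))
    (hPu : P ∉ palFactors u) : IsRich (u ++ [a]) := by
  have hsub : insert P (palFactors u) ⊆ palFactors (u ++ [a]) :=
    Finset.insert_subset hP (palFactors_mono (prefix_append u [a]).isInfix)
  have := Finset.card_le_card hsub
  have := card_palFactors_le (u ++ [a])
  rw [Finset.card_insert_of_notMem hPu] at *
  simp only [IsRich, length_append, length_singleton] at *
  omega

/-- Otherwise appending the last letter of `w` would create no new palindrome, and `w` would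
have fewer than `|w| + 1` of them. -/
lemma eq_nil_of_isLongestPalSuffix {w P s t : List A} (h : IsRich w)
    (hP : IsLongestPalSuffix P w) (hw : w = s ++ P ++ t) : t = [] := by
  by_contra ht
  obtain ⟨t', a, rfl⟩ := (eq_nil_or_concat t).resolve_left ht
  rw [concat_eq_append, ← append_assoc] at hw
  subst hw
  have hPu : P ∈ palFactors (s ++ P ++ t') := mem_palFactors.2 ⟨⟨s, t', rfl⟩, hP.2.1⟩
  have := Finset.card_le_card (Finset.insert_eq_of_mem hPu ▸ palFactors_concat_subset hP)
  have := card_palFactors_le (s ++ P ++ t')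
  simp only [IsRich, length_append, length_singleton] at *
  omega

/-- Strong induction on `r`, with `Q` the longest palindromic suffix of `r`: if `Q` is longer
than `v`, then `v` ends `Q`, hence also begins `Q`, which exhibits a shorter prefix of `x` ending
in `v`; if `Q = v`, then `v` also begins `r` and unioccurrence of `Q` forces `r = v`. -/
lemma eq_of_isPrefix_of_isSuffix {x v : List A} (hx : IsRich x) (hvx : v <+: x)
    (hv : v.reverse = v)
    (hmax : ∀ q, q <+: x → q.reverse = q → q.length < x.length → q.length ≤ v.length)
    (r : List A) (hr : r <+: x) (hrx : r.length < x.length) (hvr : v <:+ r) : r = v := by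
  induction hn : r.length using Nat.strong_induction_on generalizing r with
  | _ n ih =>
  obtain ⟨Q, ⟨c, rfl⟩, hQ, hQmax⟩ := exists_isLongestPalSuffix r
  have hvQ : v <:+ Q := suffix_of_suffix_length_le hvr (suffix_append c Q) (hQmax v hvr hv)
  rcases (hQmax v hvr hv).lt_or_eq with hlt | heq
  · obtain ⟨d, rfl⟩ : v <+: Q := by simpa [hv, hQ] using reverse_prefix.2 hvQ
    have hd := length_pos_iff.2 (show d ≠ [] by rintro rfl; simp at hlt)
    rcases eq_or_ne c [] with rfl | hc
    · have := hmax _ hr (by simpa using hQ) hrx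
      simp only [nil_append, length_append] at this
      omega
    · have hcv : c ++ v <+: x := (prefix_append _ d).trans (by simpa [append_assoc] using hr)
      simp only [length_append] at hn hrx
      have := ih (c ++ v).length (by rw [length_append]; omega) (c ++ v) hcv
        (by rw [length_append]; omega)
        (suffix_append c v) rfl
      exact absurd (by simpa using this) hc
  · obtain rfl := hvQ.eq_of_length heq
    obtain ⟨t, ht⟩ := prefix_of_prefix_length_le hvx hr hvr.length_le
    obtain rfl := (hx.of_prefix hr).eq_nil_of_isLongestPalSuffix (s := [])
      ⟨suffix_append c v, hQ, hQmax⟩ (by simpa using ht.symm)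
    simpa using ht.symm

lemma noInteriorOccurrence_longest_proper_pal_suffix {w v : List A} (hrich : IsRich w)
    (hvw : v <:+ w) (hv : v.reverse = v)
    (hmax : ∀ s : List A, s <:+ w → s.reverse = s → s.length < w.length →
      s.length ≤ v.length) :
    NoInteriorOccurrence v w := by
  intro s t hw
  refine or_iff_not_imp_left.2 fun hs => ?_
  have hmax' : ∀ q, q <+: w.reverse → q.reverse = q → q.length < w.reverse.length →
      q.length ≤ v.length := fun q hq hqp hlt =>
    hmax q (reverse_prefix.1 (by rwa [hqp])) hqp (by simpa using hlt)
  have hvw' : v <+: w.reverse := by simpa [hv] using reverse_prefix.2 hvw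
  have := hrich.reverse.eq_of_isPrefix_of_isSuffix hvw' hv hmax'
    (t.reverse ++ v) (by simp [hw, hv])
    (by simp only [hw, length_append, length_reverse]; have := length_pos_iff.2 hs; omega)
    (suffix_append _ _)
  simpa using this

/-- An occurrence of `b :: P ++ [b]` inside `x ++ b :: P` would contain an interior occurrence
of `P`, so it is a new palindrome of `x ++ b :: P ++ [b]`. -/
lemma concat_of_noInteriorOccurrence {x P : List A} {b : A} (hP : P.reverse = P)
    (hrich : IsRich (x ++ b :: P)) (hocc : NoInteriorOccurrence P (x ++ b :: P)) :
    IsRich (x ++ b :: P ++ [b]) ∧ NoInteriorOccurrence (b :: P ++ [b]) (x ++ b :: P ++ [b]) := by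
  have hnew : b :: P ++ [b] ∉ palFactors (x ++ b :: P) := by
    intro hm
    obtain ⟨s, t, hst⟩ := (mem_palFactors.1 hm).1
    rcases hocc (s ++ [b]) ([b] ++ t) (by simp [← hst]) with h | h <;> simp at h
  refine ⟨hrich.concat (mem_palFactors.2 ⟨⟨x, [], by simp⟩, by simp [hP]⟩) hnew, ?_⟩
  intro s t hst
  refine or_iff_not_imp_right.2 fun ht => absurd ?_ hnew
  exact mem_palFactors.2 ⟨infix_of_concat_eq_append hst ht, by simp [hP]⟩

lemma append_reverse_of_noInteriorOccurrence {v : List A} (hv : v.reverse = v) (p q : List A)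
    (hrich : IsRich (p ++ q ++ v)) (hocc : NoInteriorOccurrence v (p ++ q ++ v)) :
    IsRich (p ++ q ++ v ++ q.reverse) ∧
      NoInteriorOccurrence (q ++ v ++ q.reverse) (p ++ q ++ v ++ q.reverse) := by
  induction q generalizing p with
  | nil =>
    simp only [append_nil, nil_append, reverse_nil] at hrich hocc ⊢
    exact ⟨hrich, hocc⟩
  | cons b q ih =>
    obtain ⟨hr, ho⟩ := ih (p ++ [b]) (by simpa using hrich) (by simpa using hocc)
    have := concat_of_noInteriorOccurrence (x := p) (P := q ++ v ++ q.reverse) (b := b)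
      (by simp [hv]) (by simpa using hr) (by simpa using ho)
    simpa using this

end IsRich

end DecidableEq

theorem proper_palindromic_closure_rich_general [DecidableEq A] (w z v : List A)
    (hzv : w = z ++ v) (hv : v.reverse = v)
    (hmax : ∀ s : List A, s <:+ w → s.reverse = s → s.length < w.length →
      s.length ≤ v.length)
    (hrich : IsRich w) :
    IsRich (z ++ v ++ z.reverse) := by
  have hocc := hrich.noInteriorOccurrence_longest_proper_pal_suffix ⟨z, hzv.symm⟩ hv hmax
  subst hzv
  have := IsRich.append_reverse_of_noInteriorOccurrence hv [] z (by simpa using hrich)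
    (by simpa using hocc)
  simpa using this.1

theorem proper_palindromic_closure_rich [DecidableEq A] (w z v : List A)
    (hzv : w = z ++ v) (hz : z ≠ []) (hv : v.reverse = v)
    (hmax : ∀ s : List A, s <:+ w → s.reverse = s → s.length < w.length →
      s.length ≤ v.length)
    (hrich : IsRich w) :
    IsRich (z ++ v ++ z.reverse) :=
  proper_palindromic_closure_rich_general w z v hzv hv hmax hrich
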